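/- arXiv:1912.02293 — 8 statements merged into one kernel-verified Lean document; each statement's English description precedes it below -/
import Mathlib

section
/- For every natural number n, n · arccos(1/3) ≠ 2π. (The dihedral angle arccos(1/3) of the regular tetrahedron does not divide 2π; consequently regular tetrahedra cannot tile around an edge, so there is no compact packing of ℝ³ by unit spheres of a single size.) -/
open Real

theorem Real.arccos_one_third_ne_rat_mul_pi (r : ℚ) : arccos (1 / 3) ≠ r * π := by
  intro h
  have hcos : cos (r * π) = 1 / 3 := by
    rw [← h, cos_arccos (by norm_num) (by norm_num)]
  have hniven := niven ⟨r, rfl⟩ ⟨1 / 3, by rw [hcos]; norm_num⟩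
  rw [hcos] at hniven
  norm_num at hniven

/-- The dihedral angle `arccos(1/3)` of the regular tetrahedron does not divide `2π`:
for every natural number `n`, `n · arccos(1/3) ≠ 2π`. -/
theorem arccos_third_not_div_two_pi :
    ∀ n : ℕ, (n : ℝ) * Real.arccos (1 / 3) ≠ 2 * Real.pi := by
  intro n h
  rcases eq_or_ne n 0 with rfl | hn
  · simp [pi_ne_zero] at h
  · refine arccos_one_third_ne_rat_mul_pi (2 / n) ?_
    have hn' : (n : ℝ) ≠ 0 := Nat.cast_ne_zero.mpr hn
    push_cast
    field_simp
    linarith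
end

section
/- For every natural number n, n · (3·arccos(1/3) − π) ≠ 4π. (The solid angle 3·arccos(1/3) − π of a regular tetrahedron at a vertex does not divide the full solid angle 4π; consequently a sphere in a compact packing cannot be surrounded only by spheres of its own size.) -/
/-!
If `n` tetrahedral solid angles filled the sphere, then `3n · arccos(1/3) = (n + 4)π`, so
`arccos(1/3)` would be a rational multiple of `π` with rational cosine `1/3`. Niven's theorem
rules this out: the only rational cosines of rational multiples of `π` are `0, ±1/2, ±1`.
-/

open Real

/-- The solid angle `3·arccos(1/3) − π` of a regular tetrahedron at a vertex does not
divide the full solid angle `4π`: for every natural number `n`,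
`n · (3·arccos(1/3) − π) ≠ 4π`. -/
theorem solid_angle_not_div_four_pi :
    ∀ n : ℕ, (n : ℝ) * (3 * Real.arccos (1 / 3) - Real.pi) ≠ 4 * Real.pi := by
  intro n h
  have hn : (n : ℝ) ≠ 0 := by
    rintro hn
    rw [hn, zero_mul] at h
    linarith [pi_pos]
  refine arccos_one_third_ne_rat_mul_pi ((n + 4) / (3 * n)) ?_
  push_cast
  field_simp
  linarith
end

section
/- Let c₁, c₂, c₃, c₄ ∈ ℝ³ be points with pairwise distances 2 and with centroid at the origin (centers of four pairwise tangent unit spheres). Set s = 3 − 2√2 and pᵢ = −s·cᵢ for i = 1,…,4. Then dist(pᵢ, pⱼ) = 2s for all i ≠ j, and dist(pᵢ, cⱼ) = 1 + s for all i ≠ j. Hence the tetrahedral hole between four pairwise tangent unit spheres can be filled by four pairwise tangent spheres of radius 3 − 2√2, each tangent to three of the four unit spheres. -/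
/-!
Because the centres sum to zero, `0 = ⟪cᵢ, ∑ⱼ cⱼ⟫`, and polarisation turns these four equations
into linear equations for the `‖cᵢ‖²`: the centres lie on the circumsphere `‖cᵢ‖² = 3/2`, and
`⟪cᵢ, cⱼ⟫ = -1/2` for `i ≠ j`. Hence `‖-s cᵢ - cⱼ‖² = (3/2) s² - s + 3/2`, which equals `(1 + s)²`
exactly when `s² - 6s + 1 = 0`; `3 - 2√2` is the root in `[0, 1]`. Distances between the `pᵢ` are
those of the `cᵢ` scaled by `s`.
-/

open Real Finset
open scoped RealInnerProductSpace

section RegularSimplex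

variable {E ι : Type*} [NormedAddCommGroup E] [Fintype ι]
  {c : ι → E} {d : ℝ}

theorem sum_norm_sub_sq_of_pairwise_dist_eq (hc : Pairwise fun i j => dist (c i) (c j) = d)
    (k : ι) : ∑ j, ‖c k - c j‖ ^ 2 = (Fintype.card ι - 1) * d ^ 2 := by
  classical
  have hoff : ∀ j ∈ univ.erase k, ‖c k - c j‖ ^ 2 = d ^ 2 := fun j hj => by
    rw [← dist_eq_norm, hc (Ne.symm (ne_of_mem_erase hj))]
  have hcard : ((univ.erase k).card : ℝ) = Fintype.card ι - 1 := by
    rw [card_erase_of_mem (mem_univ k), card_univ, Nat.cast_pred (Fintype.card_pos_iff.2 ⟨k⟩)]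
  rw [← add_sum_erase _ _ (mem_univ k), sub_self, norm_zero, sum_congr rfl hoff, sum_const,
    nsmul_eq_mul, hcard]
  ring

variable [InnerProductSpace ℝ E]

theorem norm_sq_eq_of_pairwise_dist_eq_of_sum_eq_zero
    (hc : Pairwise fun i j => dist (c i) (c j) = d) (hsum : ∑ i, c i = 0) (i : ι) :
    ‖c i‖ ^ 2 = (Fintype.card ι - 1) * d ^ 2 / (2 * Fintype.card ι) := by
  set m : ℝ := (Fintype.card ι : ℝ)
  have hm : 0 < m := by simp only [m]; exact_mod_cast Fintype.card_pos_iff.2 ⟨i⟩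
  have hk : ∀ k, m * ‖c k‖ ^ 2 = (m - 1) * d ^ 2 - ∑ j, ‖c j‖ ^ 2 := by
    intro k
    have h0 : ∑ j, ⟪c k, c j⟫ = 0 := by rw [← inner_sum, hsum, inner_zero_right]
    have hpol : ∀ j, ⟪c k, c j⟫ = (‖c k‖ ^ 2 + ‖c j‖ ^ 2 - ‖c k - c j‖ ^ 2) / 2 :=
      fun j => by rw [norm_sub_sq_real]; ring
    simp only [hpol, ← sum_div, sum_sub_distrib, sum_add_distrib,
      sum_norm_sub_sq_of_pairwise_dist_eq hc, sum_const, card_univ, nsmul_eq_mul] at h0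
    linarith
  have hS : ∑ j, ‖c j‖ ^ 2 = (m - 1) * d ^ 2 / 2 := by
    have h := sum_congr rfl fun k (_ : k ∈ univ) => hk k
    rw [← mul_sum, sum_const, card_univ, nsmul_eq_mul] at h
    field_simp
    nlinarith
  rw [eq_div_iff (by positivity)]
  linarith [hk i]

theorem inner_eq_of_pairwise_dist_eq_of_sum_eq_zero
    (hc : Pairwise fun i j => dist (c i) (c j) = d) (hsum : ∑ i, c i = 0) {i j : ι}
    (hij : i ≠ j) : ⟪c i, c j⟫ = -d ^ 2 / (2 * Fintype.card ι) := by
  have hm : (0 : ℝ) < Fintype.card ι := by exact_mod_cast Fintype.card_pos_iff.2 ⟨i⟩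
  have hpol := norm_sub_sq_real (c i) (c j)
  rw [← dist_eq_norm, hc hij, norm_sq_eq_of_pairwise_dist_eq_of_sum_eq_zero hc hsum,
    norm_sq_eq_of_pairwise_dist_eq_of_sum_eq_zero hc hsum] at hpol
  field_simp at hpol ⊢
  linarith

end RegularSimplex

theorem three_sub_two_mul_sqrt_two_nonneg : 0 ≤ 3 - 2 * √2 := by
  nlinarith [sq_sqrt (zero_le_two : (0 : ℝ) ≤ 2), sqrt_nonneg 2]

theorem three_sub_two_mul_sqrt_two_sq : (3 - 2 * √2) ^ 2 = 6 * (3 - 2 * √2) - 1 := by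
  linear_combination (4 : ℝ) * sq_sqrt (zero_le_two : (0 : ℝ) ≤ 2)

/-- Let `c₁, c₂, c₃, c₄ ∈ ℝ³` have pairwise distances 2 and centroid at the origin
(centers of four pairwise tangent unit spheres). With `s = 3 − 2√2` and `pᵢ = −s·cᵢ`,
the points `pᵢ` have pairwise distances `2s` and `dist(pᵢ, cⱼ) = 1 + s` for `i ≠ j`:
the tetrahedral hole between four pairwise tangent unit spheres can be filled by four
pairwise tangent spheres of radius `3 − 2√2`, each tangent to three of the four
unit spheres. -/
theorem tetrahedral_hole_four_small_spheres (c : Fin 4 → EuclideanSpace ℝ (Fin 3))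
    (hc : ∀ i j, i ≠ j → dist (c i) (c j) = 2)
    (hcentroid : ∑ i, c i = 0) :
    let s : ℝ := 3 - 2 * Real.sqrt 2
    let p : Fin 4 → EuclideanSpace ℝ (Fin 3) := fun i => (-s) • c i
    (∀ i j, i ≠ j → dist (p i) (p j) = 2 * s) ∧
    (∀ i j, i ≠ j → dist (p i) (c j) = 1 + s) := by
  intro s p
  have hs : 0 ≤ s := three_sub_two_mul_sqrt_two_nonneg
  have hnorm (i : Fin 4) : ‖c i‖ ^ 2 = 3 / 2 := by
    rw [norm_sq_eq_of_pairwise_dist_eq_of_sum_eq_zero (fun i j => hc i j) hcentroid]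
    norm_num
  have hinner {i j : Fin 4} (hij : i ≠ j) : ⟪c i, c j⟫ = -1 / 2 := by
    rw [inner_eq_of_pairwise_dist_eq_of_sum_eq_zero (fun i j => hc i j) hcentroid hij]
    norm_num
  refine ⟨fun i j hij => ?_, fun i j hij => ?_⟩
  · rw [dist_smul₀, hc i j hij, norm_neg, norm_of_nonneg hs, mul_comm]
  · rw [← sq_eq_sq₀ dist_nonneg (by linarith), dist_eq_norm, norm_sub_sq_real,
      real_inner_smul_left, hinner hij, norm_smul, mul_pow, hnorm, hnorm, norm_neg,
      norm_of_nonneg hs]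
    linear_combination (1 / 2 : ℝ) * three_sub_two_mul_sqrt_two_sq
end

section
/- Set r = √2 − 1 and s = (1/2)·√(9 + 6√2) − √2 − 1/2. There exist points c₁, c₂, c₃, q, p ∈ ℝ³ such that dist(cᵢ, cⱼ) = 2 for i ≠ j, dist(q, cᵢ) = 1 + r for all i, dist(p, cᵢ) = 1 + s for all i, and dist(p, q) = r + s. (A sphere of radius s fills the tetrahedral hole bounded by three mutually tangent unit spheres and a sphere of radius √2 − 1 tangent to all three, as arises in a close-packing of unit spheres with octahedral holes filled by spheres of radius √2 − 1.) -/
/-!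
Put the three unit centres at the vertices of an equilateral triangle of side 2 in the plane
`z = 0` and the two other centres on its axis; a point `(0, 0, z)` is at distance `√(4/3 + z²)`
from every vertex. Tangency to the unit spheres puts `q` at height `√6/3`, and `p` is placed
`r + s` below it. Its tangency to the unit spheres is then, after
`√(9 + 6√2) = √3 (1 + √2)`, a polynomial identity in `√2` and `√3`.
-/

open Real

noncomputable def equilateralTriangle (a : ℝ) : Fin 3 → EuclideanSpace ℝ (Fin 3) :=
  ![!₂[a * √3 / 3, 0, 0], !₂[-(a * √3 / 6), a / 2, 0], !₂[-(a * √3 / 6), -(a / 2), 0]]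

noncomputable def axisPoint (z : ℝ) : EuclideanSpace ℝ (Fin 3) := !₂[0, 0, z]

lemma dist_equilateralTriangle (a : ℝ) {i j : Fin 3} (hij : i ≠ j) :
    dist (equilateralTriangle a i) (equilateralTriangle a j) = |a| := by
  have h3 : √3 ^ 2 = 3 := sq_sqrt (by norm_num)
  rw [EuclideanSpace.dist_eq, ← sqrt_sq_eq_abs]
  congr 1
  fin_cases i <;> fin_cases j <;>
    simp [equilateralTriangle, Fin.sum_univ_three, Real.dist_eq, sq_abs] at hij ⊢ <;>
    nlinarith [h3]

lemma dist_axisPoint_equilateralTriangle (z a : ℝ) (i : Fin 3) :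
    dist (axisPoint z) (equilateralTriangle a i) = √(a ^ 2 / 3 + z ^ 2) := by
  have h3 : √3 ^ 2 = 3 := sq_sqrt (by norm_num)
  rw [EuclideanSpace.dist_eq]
  congr 1
  fin_cases i <;>
    simp [axisPoint, equilateralTriangle, Fin.sum_univ_three, Real.dist_eq, sq_abs] <;>
    nlinarith [h3]

lemma dist_axisPoint_axisPoint (y z : ℝ) : dist (axisPoint y) (axisPoint z) = |y - z| := by
  simp [EuclideanSpace.dist_eq, axisPoint, Fin.sum_univ_three, Real.dist_eq, sqrt_sq_eq_abs]

lemma sqrt_nine_add_six_sqrt_two : √(9 + 6 * √2) = √3 * (1 + √2) := by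
  rw [sqrt_eq_iff_eq_sq (by positivity) (by positivity)]
  linear_combination (-(1 + √2) ^ 2) * sq_sqrt (show (0 : ℝ) ≤ 3 by norm_num) -
    3 * sq_sqrt (show (0 : ℝ) ≤ 2 by norm_num)

/-- With `r = √2 − 1` and `s = (1/2)√(9 + 6√2) − √2 − 1/2`, there exist three mutually
tangent unit spheres (centers `cᵢ`, pairwise distances 2), a sphere of radius `r`
tangent to all three (center `q`), and a sphere of radius `s` tangent to all three unit
spheres and to the sphere of radius `r` (center `p`): a sphere of radius `s` fills the
tetrahedral hole `111r` arising in a close-packing of unit spheres whose octahedral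
holes are filled by spheres of radius `√2 − 1`. -/
theorem sphere_fills_111r_hole :
    let r : ℝ := Real.sqrt 2 - 1
    let s : ℝ := (1 / 2) * Real.sqrt (9 + 6 * Real.sqrt 2) - Real.sqrt 2 - 1 / 2
    ∃ (c : Fin 3 → EuclideanSpace ℝ (Fin 3)) (q p : EuclideanSpace ℝ (Fin 3)),
      (∀ i j, i ≠ j → dist (c i) (c j) = 2) ∧
      (∀ i, dist q (c i) = 1 + r) ∧
      (∀ i, dist p (c i) = 1 + s) ∧
      dist p q = r + s := by
  intro r s
  have h2 : √2 ^ 2 = 2 := sq_sqrt (by norm_num)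
  have h3 : √3 ^ 2 = 3 := sq_sqrt (by norm_num)
  have hs : s = (√3 * (1 + √2) - 2 * √2 - 1) / 2 := by
    simp only [s, sqrt_nine_add_six_sqrt_two]; ring
  have h2_bounds : 1 ≤ √2 ∧ √2 ≤ 2 := ⟨one_le_sqrt.2 (by norm_num), by nlinarith [sqrt_nonneg 2]⟩
  have h3_ge : 3 / 2 ≤ √3 := by nlinarith [sqrt_nonneg 3]
  have hr_add_s : 0 ≤ r + s := by simp only [r, hs]; nlinarith
  have hone_add_s : 0 ≤ 1 + s := by rw [hs]; nlinarith
  refine ⟨equilateralTriangle 2, axisPoint (√2 * √3 / 3), axisPoint (√2 * √3 / 3 - (r + s)),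
    fun i j hij => ?_, fun i => ?_, fun i => ?_, ?_⟩
  · rw [dist_equilateralTriangle 2 hij, abs_two]
  · rw [dist_axisPoint_equilateralTriangle, sqrt_eq_iff_eq_sq (by positivity) (by simp [r])]
    simp only [r]
    linear_combination (√3 ^ 2 / 9 - 1) * h2 + 2 / 9 * h3
  · rw [dist_axisPoint_equilateralTriangle, sqrt_eq_iff_eq_sq (by positivity) hone_add_s, hs]
    simp only [r]
    linear_combination (-(2 * √3 ^ 2 + 9 - 9 * √3) / 9) * h2 - (3 * √2 + 4) / 9 * h3
  · rw [dist_axisPoint_axisPoint, sub_sub_cancel_left, abs_neg, abs_of_nonneg hr_add_s]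
end

section
/- The real number r = 5 − 2√5 − (1/2)·√(130 − 58√5) is positive, satisfies r⁴ − 20r³ + 45r² − 30r + 5 = 0, and is the smallest positive real root of the polynomial X⁴ − 20X³ + 45X² − 30X + 5. -/
open Real

/-- The real number `r = 5 − 2√5 − (1/2)√(130 − 58√5)` is positive, satisfies
`r⁴ − 20r³ + 45r² − 30r + 5 = 0`, and is the smallest positive real root of the
polynomial `X⁴ − 20X³ + 45X² − 30X + 5`. -/
theorem smallest_positive_root_pentagonal :
    let r : ℝ := 5 - 2 * Real.sqrt 5 - (1 / 2) * Real.sqrt (130 - 58 * Real.sqrt 5)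
    0 < r ∧
    r ^ 4 - 20 * r ^ 3 + 45 * r ^ 2 - 30 * r + 5 = 0 ∧
    IsLeast {x : ℝ | 0 < x ∧ x ^ 4 - 20 * x ^ 3 + 45 * x ^ 2 - 30 * x + 5 = 0} r := by
  intro r
  have hs : (Real.sqrt 5) ^ 2 = 5 := Real.sq_sqrt (by norm_num)
  set s := Real.sqrt 5 with hs_def
  have hs0 : 0 ≤ s := Real.sqrt_nonneg 5
  have hs2 : s < 25 / 11 := by nlinarith
  have harg : (0:ℝ) ≤ 130 - 58 * s := by nlinarith
  have ht : (Real.sqrt (130 - 58 * s)) ^ 2 = 130 - 58 * s := Real.sq_sqrt harg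
  set t := Real.sqrt (130 - 58 * s) with ht_def
  have ht0 : 0 ≤ t := Real.sqrt_nonneg _
  have hA : (0:ℝ) < 10 - 4 * s := by nlinarith
  have htA : t < 10 - 4 * s := by
    have h2 : t ^ 2 < (10 - 4 * s) ^ 2 := by nlinarith
    exact lt_of_pow_lt_pow_left₀ 2 hA.le h2
  have hr : r = 5 - 2 * s - (1 / 2) * t := rfl
  have hrpos : 0 < r := by rw [hr]; linarith
  have hq1 : r ^ 2 - (10 - 4 * s) * r + (25 - 11 * s) / 2 = 0 := by
    rw [hr]; linear_combination (1/4 : ℝ) * ht - 4 * hs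
  have hpr : r ^ 4 - 20 * r ^ 3 + 45 * r ^ 2 - 30 * r + 5 = 0 := by
    linear_combination (r ^ 2 - (10 + 4 * s) * r + (25 + 11 * s) / 2) * hq1 +
      (16 * r ^ 2 - 44 * r + 121 / 4) * hs
  refine ⟨hrpos, hpr, ⟨hrpos, hpr⟩, ?_⟩
  rintro x ⟨hx0, hx⟩
  have hfac : (x ^ 2 - (10 - 4 * s) * x + (25 - 11 * s) / 2) *
      (x ^ 2 - (10 + 4 * s) * x + (25 + 11 * s) / 2) = 0 := by
    linear_combination hx - (16 * x ^ 2 - 44 * x + 121 / 4) * hs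
  rcases mul_eq_zero.mp hfac with h1 | h2
  · have hsq : (2 * x - (10 - 4 * s)) ^ 2 = t ^ 2 := by
      linear_combination 4 * h1 + 16 * hs - ht
    have hfac2 : (2 * x - (10 - 4 * s) - t) * (2 * x - (10 - 4 * s) + t) = 0 := by
      linear_combination hsq
    rcases mul_eq_zero.mp hfac2 with h | h
    · rw [hr]; linarith
    · rw [hr]; linarith
  · have hx1 : 1 < x := by
      by_contra h
      push_neg at h
      nlinarith [mul_nonneg (by linarith : (0:ℝ) ≤ 10 + 4 * s)
        (by linarith : (0:ℝ) ≤ 1 - x)]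
    have hr1 : r ≤ 1 := by rw [hr]; nlinarith
    linarith
end

section
/- Let r = 5 − 2√5 − (1/2)·√(130 − 58√5) (the smallest positive root of X⁴ − 20X³ + 45X² − 30X + 5) and set s = r · (1 − sin(π/5))/sin(π/5). Then s = (1/2)·√(10 − 2√5) − 1. (In the pentagonal bipyramid shell with a base of five spheres of radius r and two unit apex spheres, the central sphere has radius s = r·s₅ = (1/2)√(10 − 2√5) − 1.) -/
open Real

/-- `sin (π/5) = √(10 − 2√5) / 4`. -/
lemma sin_pi_div_five' : Real.sin (Real.pi / 5) = Real.sqrt (10 - 2 * Real.sqrt 5) / 4 := by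
  have h5 : Real.sqrt 5 ^ 2 = 5 := Real.sq_sqrt (by norm_num)
  have hs : Real.sin (Real.pi / 5) ^ 2 = (10 - 2 * Real.sqrt 5) / 16 := by
    have := Real.sin_sq_add_cos_sq (Real.pi / 5)
    rw [Real.cos_pi_div_five] at this
    nlinarith [this]
  have hpos : 0 ≤ Real.sin (Real.pi / 5) := by
    apply Real.sin_nonneg_of_nonneg_of_le_pi
    · positivity
    · nlinarith [Real.pi_pos]
  have : Real.sin (Real.pi / 5) = Real.sqrt ((10 - 2 * Real.sqrt 5) / 16) := by
    rw [← hs, Real.sqrt_sq hpos]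
  have h10 : (0:ℝ) ≤ 10 - 2 * Real.sqrt 5 := by
    nlinarith [Real.sqrt_nonneg 5, h5]
  rw [this, show ((10 - 2 * Real.sqrt 5) / 16 : ℝ) = (10 - 2 * Real.sqrt 5) / 16 from rfl,
    Real.sqrt_div h10, show Real.sqrt 16 = 4 by
      rw [show (16:ℝ) = 4^2 by norm_num, Real.sqrt_sq]; norm_num]

/-- With `r = 5 − 2√5 − (1/2)√(130 − 58√5)` (the smallest positive root of
`X⁴ − 20X³ + 45X² − 30X + 5`) and `s = r·(1 − sin(π/5))/sin(π/5)`, one has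
`s = (1/2)√(10 − 2√5) − 1`: in the pentagonal bipyramid shell with a base of five
spheres of radius `r` and two unit apex spheres, the central sphere has radius
`r·s₅ = (1/2)√(10 − 2√5) − 1`. -/
theorem pentagonal_bipyramid_central_radius :
    let r : ℝ := 5 - 2 * Real.sqrt 5 - (1 / 2) * Real.sqrt (130 - 58 * Real.sqrt 5)
    let s : ℝ := r * ((1 - Real.sin (Real.pi / 5)) / Real.sin (Real.pi / 5))
    s = (1 / 2) * Real.sqrt (10 - 2 * Real.sqrt 5) - 1 := by
  intro r s
  have ha0 : (0:ℝ) ≤ Real.sqrt 5 := Real.sqrt_nonneg 5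
  have ha : Real.sqrt 5 ^ 2 = 5 := Real.sq_sqrt (by norm_num)
  have haL : (223/100:ℝ) ≤ Real.sqrt 5 := by
    rw [show (223/100:ℝ) = Real.sqrt ((223/100)^2) from (Real.sqrt_sq (by norm_num)).symm]
    exact Real.sqrt_le_sqrt (by norm_num)
  have haU : Real.sqrt 5 ≤ 224/100 := by
    rw [show (224/100:ℝ) = Real.sqrt ((224/100)^2) from (Real.sqrt_sq (by norm_num)).symm]
    exact Real.sqrt_le_sqrt (by norm_num)
  set a : ℝ := Real.sqrt 5 with ha_def
  have hb0 : (0:ℝ) ≤ Real.sqrt (10 - 2 * a) := Real.sqrt_nonneg _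
  have hb2 : Real.sqrt (10 - 2 * a) ^ 2 = 10 - 2 * a :=
    Real.sq_sqrt (by nlinarith)
  set b : ℝ := Real.sqrt (10 - 2 * a) with hb_def
  have hc0 : (0:ℝ) ≤ Real.sqrt (130 - 58 * a) := Real.sqrt_nonneg _
  have hc2 : Real.sqrt (130 - 58 * a) ^ 2 = 130 - 58 * a :=
    Real.sq_sqrt (by nlinarith)
  set c : ℝ := Real.sqrt (130 - 58 * a) with hc_def
  have hbpos : 0 < b := by nlinarith
  have hsin : Real.sin (Real.pi / 5) = b / 4 := sin_pi_div_five'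
  -- the key algebraic identity
  have hsq : (30 - 14 * a - 4 * c) ^ 2 = ((8 - 4 * a - c) * b) ^ 2 := by
    linear_combination (-208 + 32 * a + 16 * c) * ha +
      (-64 + 64 * a + 16 * c - 16 * a ^ 2 - 8 * a * c - c ^ 2) * hb2 + (6 + 2 * a) * hc2
  have hLneg : 30 - 14 * a - 4 * c < 0 := by nlinarith
  have hRneg : (8 - 4 * a - c) * b ≤ 0 := by nlinarith
  have key : 30 - 14 * a - 4 * c = (8 - 4 * a - c) * b := by
    have h0 : (30 - 14 * a - 4 * c - (8 - 4 * a - c) * b) *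
        (30 - 14 * a - 4 * c + (8 - 4 * a - c) * b) = 0 := by
      linear_combination hsq
    rcases mul_eq_zero.mp h0 with h | h
    · linarith
    · linarith
  show r * ((1 - Real.sin (Real.pi / 5)) / Real.sin (Real.pi / 5)) = 1 / 2 * b - 1
  rw [hsin]
  have hr : r = 5 - 2 * a - 1 / 2 * c := rfl
  rw [hr]
  field_simp
  nlinarith [key, hb2]
end

section
/- Set r = 4 − √14 and s = 6 − 3√2 − √(42 − 28√2). There exist points a₁, a₂, a₃, b₁, b₂, b₃, p ∈ ℝ³ such that dist(aᵢ, aⱼ) = 2 and dist(bᵢ, bⱼ) = 2r for all i ≠ j, dist(aᵢ, bⱼ) = 1 + r for all i ≠ j, dist(p, aᵢ) = 1 + s and dist(p, bᵢ) = r + s for all i. (A sphere of radius s fills the octahedral hole whose shell is an octahedron with one face of three mutually tangent unit spheres and the opposite face of three mutually tangent spheres of radius r.) -/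
open Real

/-!
Put the unit centres `aᵢ = vᵢ` at the vertices of an equilateral triangle of side 2 centred at the
origin, the small centres at `bᵢ = h e - r vᵢ` for a unit normal `e` (the triangle scaled by `-r`
and lifted, so that `bᵢ` lies opposite `aᵢ`) and `p = z e` on the common axis. As
`⟪vᵢ, vⱼ⟫ = 4/3` or `-2/3`, every prescribed distance reduces to Pythagoras in the heights `h`
and `z`. Writing `√14 = √2 √7` and `s = (3 - √7)(2 - √2)`, the resulting three equations are
solved by `h = (√7 - √2)/√3` and `z = (3√7 + 7√2 - 3√14 - 6)/√3`.
-/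

open RealInnerProductSpace

section InnerProductSpace

variable {E : Type*} [NormedAddCommGroup E] [InnerProductSpace ℝ E]

theorem dist_eq_of_inner_sub_self_eq_sq {x y : E} {c : ℝ} (hc : 0 ≤ c)
    (h : ⟪x - y, x - y⟫ = c ^ 2) : dist x y = c := by
  rw [dist_eq_norm, norm_eq_sqrt_real_inner, h, Real.sqrt_sq hc]

theorem exists_mixed_octahedron {v : Fin 3 → E} {e : E}
    (hv : ∀ i j, ⟪v i, v j⟫ = if i = j then 4 / 3 else -2 / 3) (he : ⟪e, e⟫ = 1)
    (hve : ∀ i, ⟪v i, e⟫ = 0) {r s h z : ℝ} (hr : 0 ≤ r) (hs : 0 ≤ s)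
    (hh : h ^ 2 + 4 / 3 * (1 - r + r ^ 2) = (1 + r) ^ 2)
    (hz : z ^ 2 + 4 / 3 = (1 + s) ^ 2)
    (hzh : (z - h) ^ 2 + 4 / 3 * r ^ 2 = (r + s) ^ 2) :
    ∃ (a b : Fin 3 → E) (p : E),
      (∀ i j, i ≠ j → dist (a i) (a j) = 2) ∧
      (∀ i j, i ≠ j → dist (b i) (b j) = 2 * r) ∧
      (∀ i j, i ≠ j → dist (a i) (b j) = 1 + r) ∧
      (∀ i, dist p (a i) = 1 + s) ∧
      (∀ i, dist p (b i) = r + s) := by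
  have hev : ∀ i, ⟪e, v i⟫ = 0 := fun i => by rw [real_inner_comm, hve]
  refine ⟨v, fun i => h • e - r • v i, z • e, fun i j hij => ?_, fun i j hij => ?_,
    fun i j hij => ?_, fun i => ?_, fun i => ?_⟩ <;>
  refine dist_eq_of_inner_sub_self_eq_sq (by positivity) ?_ <;>
  simp only [inner_sub_left, inner_sub_right, real_inner_smul_left, real_inner_smul_right, hv, he,
    hve, hev, ↓reduceIte]
  · simp only [if_neg hij, if_neg hij.symm]; norm_num
  · simp only [if_neg hij, if_neg hij.symm]; ring
  · simp only [if_neg hij, if_neg hij.symm]; linear_combination hh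
  · linear_combination hz
  · linear_combination hzh

end InnerProductSpace

theorem exists_equilateral_triangle_and_unit_normal :
    ∃ (v : Fin 3 → EuclideanSpace ℝ (Fin 3)) (e : EuclideanSpace ℝ (Fin 3)),
      (∀ i j, ⟪v i, v j⟫ = if i = j then 4 / 3 else -2 / 3) ∧ ⟪e, e⟫ = 1 ∧
        ∀ i, ⟪v i, e⟫ = 0 := by
  have h3 : √3 ^ 2 = 3 := sq_sqrt (by norm_num)
  refine ⟨![!₂[2 / √3, 0, 0], !₂[-1 / √3, 1, 0], !₂[-1 / √3, -1, 0]], !₂[0, 0, 1], ?_, ?_, ?_⟩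
  all_goals simp only [PiLp.inner_apply, Fin.sum_univ_three, RCLike.inner_apply, conj_trivial]
  · intro i j
    fin_cases i <;> fin_cases j <;> simp <;> field_simp <;> linarith
  · simp
  · intro i
    fin_cases i <;> simp

theorem sqrt_42_sub_28_mul_sqrt_two : √(42 - 28 * √2) = √7 * (2 - √2) := by
  have h2 : √2 ^ 2 = 2 := sq_sqrt (by norm_num)
  have h7 : √7 ^ 2 = 7 := sq_sqrt (by norm_num)
  have h2_le : √2 ≤ 2 := sqrt_le_iff.mpr ⟨by norm_num, by norm_num⟩
  rw [show 42 - 28 * √2 = (√7 * (2 - √2)) ^ 2 by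
    linear_combination (-(√7 ^ 2)) * h2 + (4 * √2 - 6) * h7]
  exact sqrt_sq (mul_nonneg (sqrt_nonneg 7) (by linarith))

/-- With `r = 4 − √14` and `s = 6 − 3√2 − √(42 − 28√2)`, there exists an octahedral
configuration with one face of three mutually tangent unit spheres (centers `aᵢ`,
pairwise distances 2) and the opposite face of three mutually tangent spheres of
radius `r` (centers `bᵢ`, pairwise distances `2r`), where `aᵢ` is tangent to `bⱼ` for
`i ≠ j` (opposite pairs `aᵢ, bᵢ` are not adjacent), and a central sphere of radius `s`
(center `p`) tangent to all six. -/
theorem sphere_fills_mixed_octahedral_hole :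
    let r : ℝ := 4 - Real.sqrt 14
    let s : ℝ := 6 - 3 * Real.sqrt 2 - Real.sqrt (42 - 28 * Real.sqrt 2)
    ∃ (a b : Fin 3 → EuclideanSpace ℝ (Fin 3)) (p : EuclideanSpace ℝ (Fin 3)),
      (∀ i j, i ≠ j → dist (a i) (a j) = 2) ∧
      (∀ i j, i ≠ j → dist (b i) (b j) = 2 * r) ∧
      (∀ i j, i ≠ j → dist (a i) (b j) = 1 + r) ∧
      (∀ i, dist p (a i) = 1 + s) ∧
      (∀ i, dist p (b i) = r + s) := by
  intro r s
  have h2 : √2 ^ 2 = 2 := sq_sqrt (by norm_num)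
  have h3 : √3 ^ 2 = 3 := sq_sqrt (by norm_num)
  have h7 : √7 ^ 2 = 7 := sq_sqrt (by norm_num)
  have hr : r = 4 - √2 * √7 := by rw [← sqrt_mul zero_le_two]; norm_num [r]
  have hs : s = (3 - √7) * (2 - √2) := by simp only [s, sqrt_42_sub_28_mul_sqrt_two]; ring
  have hr_nonneg : 0 ≤ r := sub_nonneg.mpr (sqrt_le_iff.mpr ⟨by norm_num, by norm_num⟩)
  have hs_nonneg : 0 ≤ s := hs ▸ mul_nonneg
    (sub_nonneg.mpr (sqrt_le_iff.mpr ⟨by norm_num, by norm_num⟩))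
    (sub_nonneg.mpr (sqrt_le_iff.mpr ⟨by norm_num, by norm_num⟩))
  obtain ⟨v, e, hv, he, hve⟩ := exists_equilateral_triangle_and_unit_normal
  refine exists_mixed_octahedron hv he hve (h := (√7 - √2) / √3)
    (z := (3 * √7 + 7 * √2 - 3 * √2 * √7 - 6) / √3) hr_nonneg hs_nonneg ?_ ?_ ?_ <;>
  simp only [hr, hs] <;> grind
end

section
/- Set r = 4 − √14 and d = r·√(3/2). Let v₁,…,v₆ be the points ±√2·e₁, ±√2·e₂, ±√2·e₃ of ℝ³ (centers of six unit spheres forming a regular octahedron of edge 2), and let q_ε = (d/√3)·(ε₁, ε₂, ε₃) for each sign vector ε ∈ {−1,1}³ with ε₁ε₂ε₃ = 1 (four points). Then dist(q_ε, q_{ε'}) = 2r for ε ≠ ε', and each q_ε is at distance exactly 1 + r from the three points √2·ε₁e₁, √2·ε₂e₂, √2·ε₃e₃ (the vertices of the corresponding octahedron face) and at distance greater than 1 + r from the other three vᵢ. Hence the octahedral hole of six unit spheres can be filled by four pairwise tangent spheres of radius 4 − √14, each tangent to the three unit spheres of one of four alternating faces of the octahedron. -/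
open Real

/-!
Write `c = d / √3 = r / √2`, so that `q ε = c • ε`. For sign vectors
`‖c • ε - s • eᵢ‖² = 3c² - 2cs εᵢ + s²` and `‖c • ε - c • ε'‖² = c² (6 - 2 ⟪ε, ε'⟫)`.
Two distinct sign vectors with product `1` differ in exactly two coordinates, so `⟪ε, ε'⟫ = -1`
and the `q ε` are `√(8c²) = 2r` apart. The squared distance from `q ε` to `√2 σ eᵢ` is
`3r²/2 - 2rσεᵢ + 2σ²`: on the face (`σ = εᵢ`) it equals `(1 + r)²` precisely because
`r = 4 - √14` is a root of `r² - 8r + 2`, and at the opposite vertices it is larger by `4r > 0`.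
-/

section SignVectors

variable {ι : Type*} {ε ε' : ι → ℝ}

lemma eq_of_forall_mul_eq_one (hε : ∀ i, ε i = 1 ∨ ε i = -1) (h : ∀ i, ε i * ε' i = 1) :
    ε = ε' := by
  funext i
  have hi := h i
  rcases hε i with hεi | hεi <;> rw [hεi] at hi ⊢ <;> linarith

variable [Fintype ι]

lemma norm_sq_toLp_of_sign (hε : ∀ i, ε i = 1 ∨ ε i = -1) :
    ‖(WithLp.toLp 2 ε : EuclideanSpace ℝ ι)‖ ^ 2 = Fintype.card ι := by
  simp [EuclideanSpace.real_norm_sq_eq, fun i => sq_eq_one_iff.mpr (hε i)]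

lemma dist_smul_toLp_single_sq [DecidableEq ι] (hε : ∀ i, ε i = 1 ∨ ε i = -1) (c s : ℝ) (i : ι) :
    dist (c • WithLp.toLp 2 ε : EuclideanSpace ℝ ι) (EuclideanSpace.single i s) ^ 2 =
      Fintype.card ι * c ^ 2 - 2 * c * s * ε i + s ^ 2 := by
  rw [dist_eq_norm, norm_sub_sq_real, norm_smul, mul_pow, norm_sq_toLp_of_sign hε,
    real_inner_smul_left, EuclideanSpace.inner_single_right]
  simp only [norm_eq_abs, sq_abs, ringHom_apply, PiLp.norm_single, add_left_inj]
  ring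

lemma dist_smul_toLp_smul_toLp_sq (hε : ∀ i, ε i = 1 ∨ ε i = -1)
    (hε' : ∀ i, ε' i = 1 ∨ ε' i = -1) (c : ℝ) :
    dist (c • WithLp.toLp 2 ε : EuclideanSpace ℝ ι) (c • WithLp.toLp 2 ε') ^ 2 =
      c ^ 2 * (2 * Fintype.card ι - 2 * ∑ i, ε i * ε' i) := by
  rw [dist_smul₀, mul_pow, Real.norm_eq_abs, sq_abs, dist_eq_norm, norm_sub_sq_real,
    norm_sq_toLp_of_sign hε, norm_sq_toLp_of_sign hε', PiLp.inner_apply]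
  congr 1
  simp only [RCLike.inner_apply, ringHom_apply, mul_comm (ε' _)]
  ring

end SignVectors

lemma mul_eq_one_or_eq_neg_one {x y : ℝ} (hx : x = 1 ∨ x = -1) (hy : y = 1 ∨ y = -1) :
    x * y = 1 ∨ x * y = -1 := by
  rcases hx with rfl | rfl <;> rcases hy with rfl | rfl <;> norm_num

lemma add_add_eq_neg_one_of_mul_mul_eq_one {x y z : ℝ} (hx : x = 1 ∨ x = -1)
    (hy : y = 1 ∨ y = -1) (hz : z = 1 ∨ z = -1) (h : x * y * z = 1)
    (hne : ¬(x = 1 ∧ y = 1 ∧ z = 1)) : x + y + z = -1 := by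
  revert h hne
  rcases hx with rfl | rfl <;> rcases hy with rfl | rfl <;> rcases hz with rfl | rfl <;>
    norm_num

lemma sum_mul_eq_neg_one_of_ne {ε ε' : Fin 3 → ℝ} (hε : ∀ i, ε i = 1 ∨ ε i = -1)
    (hε' : ∀ i, ε' i = 1 ∨ ε' i = -1) (hp : ε 0 * ε 1 * ε 2 = 1)
    (hp' : ε' 0 * ε' 1 * ε' 2 = 1) (hne : ε ≠ ε') : ∑ i, ε i * ε' i = -1 := by
  have hsign i := mul_eq_one_or_eq_neg_one (hε i) (hε' i)
  rw [Fin.sum_univ_three]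
  refine add_add_eq_neg_one_of_mul_mul_eq_one (hsign 0) (hsign 1) (hsign 2)
    (by linear_combination (ε' 0 * ε' 1 * ε' 2) * hp + hp') ?_
  rintro ⟨h0, h1, h2⟩
  exact hne (eq_of_forall_mul_eq_one hε fun i => by fin_cases i <;> assumption)

lemma four_sub_sqrt_fourteen_pos_and_root :
    0 < 4 - √14 ∧ (4 - √14) ^ 2 - 8 * (4 - √14) + 2 = 0 := by
  have h := Real.sq_sqrt (show (0 : ℝ) ≤ 14 by norm_num)
  exact ⟨by nlinarith [Real.sqrt_nonneg 14], by linear_combination h⟩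

/-- With `r = 4 − √14` and `d = r√(3/2)`, consider the six points `±√2·eᵢ` of `ℝ³`
(centers of six unit spheres forming a regular octahedron of edge 2, here
`v i σ = √2·σ·eᵢ`), and for each sign vector `ε ∈ {−1,1}³` with `ε₁ε₂ε₃ = 1` the
point `q ε = (d/√3)·(ε₁, ε₂, ε₃)`. Distinct points `q ε`, `q ε'` are at distance `2r`,
and each `q ε` is at distance exactly `1 + r` from the three octahedron vertices
`√2·εᵢ·eᵢ` of the corresponding face, and at distance greater than `1 + r` from the
other three vertices: the octahedral hole of six unit spheres can be filled by four
pairwise tangent spheres of radius `4 − √14`, each tangent to the three unit spheres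
of one of four alternating faces of the octahedron. -/
theorem octahedral_hole_four_spheres :
    let r : ℝ := 4 - Real.sqrt 14
    let d : ℝ := r * Real.sqrt (3 / 2)
    let v : Fin 3 → ℝ → EuclideanSpace ℝ (Fin 3) := fun i σ =>
      EuclideanSpace.single i (Real.sqrt 2 * σ)
    let q : (Fin 3 → ℝ) → EuclideanSpace ℝ (Fin 3) := fun ε =>
      (WithLp.toLp 2 (fun i => (d / Real.sqrt 3) * ε i) : EuclideanSpace ℝ (Fin 3))
    ∀ ε ε' : Fin 3 → ℝ,
      (∀ i, ε i = 1 ∨ ε i = -1) → ε 0 * ε 1 * ε 2 = 1 →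
      (∀ i, ε' i = 1 ∨ ε' i = -1) → ε' 0 * ε' 1 * ε' 2 = 1 →
      (ε ≠ ε' → dist (q ε) (q ε') = 2 * r) ∧
      (∀ i, dist (q ε) (v i (ε i)) = 1 + r) ∧
      (∀ i, dist (q ε) (v i (-ε i)) > 1 + r) := by
  intro r d v q ε ε' hε hp hε' hp'
  obtain ⟨hr, hr_root⟩ : 0 < r ∧ r ^ 2 - 8 * r + 2 = 0 := four_sub_sqrt_fourteen_pos_and_root
  have hs2 : √2 ^ 2 = 2 := Real.sq_sqrt (by norm_num)
  have hc : d / √3 * √2 = r := by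
    simp only [d, Real.sqrt_div' 3 (show (0 : ℝ) ≤ 2 by norm_num)]
    field_simp
  have hc2 : (d / √3) ^ 2 = r ^ 2 / 2 := by
    rw [← hc, mul_pow, hs2]
    ring
  have hq (η : Fin 3 → ℝ) : q η = (d / √3) • WithLp.toLp 2 η := rfl
  have hdist (i : Fin 3) (σ : ℝ) :
      dist (q ε) (v i σ) ^ 2 = 3 * r ^ 2 / 2 - 2 * r * σ * ε i + 2 * σ ^ 2 := by
    rw [hq, dist_smul_toLp_single_sq hε]
    simp only [Fintype.card_fin, Nat.cast_ofNat]
    linear_combination 3 * hc2 - 2 * σ * ε i * hc + σ ^ 2 * hs2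
  have hεi (i : Fin 3) : ε i ^ 2 = 1 := sq_eq_one_iff.mpr (hε i)
  refine ⟨fun hne => ?_, fun i => ?_, fun i => ?_⟩
  · rw [← pow_left_inj₀ dist_nonneg (by positivity) two_ne_zero, hq, hq,
      dist_smul_toLp_smul_toLp_sq hε hε', sum_mul_eq_neg_one_of_ne hε hε' hp hp' hne, hc2]
    simp only [Fintype.card_fin]
    ring
  · rw [← pow_left_inj₀ dist_nonneg (by positivity) two_ne_zero, hdist]
    linear_combination (2 - 2 * r) * hεi i + hr_root / 2
  · rw [gt_iff_lt, ← pow_lt_pow_iff_left₀ (by positivity) dist_nonneg two_ne_zero, hdist]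
    nlinarith [hεi i]
end
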